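/- arXiv:1202.3896 — 2 statements merged into one kernel-verified Lean document; each statement's English description precedes it below -/
import Mathlib

section
/- Let Sk be a finite connected bipartite ribbon graph in which every black vertex has valency 1 or 3, every white vertex has valency 1 or 2, with n_• monovalent black vertices, n_∘ monovalent white vertices, and n_i regions of width i for i ≥ 1. Then Sk has genus zero (its minimal supporting surface is a sphere) if and only if 3n_∘ + 4n_• + Σ_{i≥1} (6 - i)·n_i = 12. -/
/-- An (abstract) finite skeleton: a finite connected bipartite ribbon graph whose
black vertices have valency 3 or 1 and whose white vertices have valency 2 or 1.
Combinatorially: a finite edge set `E` with permutations `x` (rotation around black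
vertices, `x³ = 1`) and `y` (rotation around white vertices, `y² = 1`) generating a
transitive action. Black vertices are the orbits of `x`, white vertices the orbits
of `y`, and regions the orbits of `x * y`. -/
structure Skeleton where
  E : Type
  [fintypeE : Fintype E]
  [decEqE : DecidableEq E]
  x : Equiv.Perm E
  y : Equiv.Perm E
  hx : x ^ 3 = 1
  hy : y ^ 2 = 1
  conn : ∀ e e' : E, ∃ g ∈ Subgroup.closure ({x, y} : Set (Equiv.Perm E)), g e = e'

attribute [instance] Skeleton.fintypeE Skeleton.decEqE

/-- The number of fixed points of a permutation (= number of its orbits of size 1). -/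
def numFixed {E : Type} [Fintype E] [DecidableEq E] (g : Equiv.Perm E) : ℕ :=
  Fintype.card {e : E // g e = e}

/-- The number of orbits of a permutation: the nontrivial cycles together with the
fixed points. -/
def numOrbits {E : Type} [Fintype E] [DecidableEq E] (g : Equiv.Perm E) : ℕ :=
  Multiset.card g.cycleType + numFixed g

/-- The number of orbits of a permutation having exactly `i` elements. -/
def numOrbitsOfSize {E : Type} [Fintype E] [DecidableEq E] (g : Equiv.Perm E) (i : ℕ) : ℕ :=
  if i = 1 then numFixed g else Multiset.count i g.cycleType

/-- A skeleton has genus zero iff its Euler characteristic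
`V - E + F = (#black vertices + #white vertices) - #edges + #regions` equals 2,
i.e. its minimal supporting surface is a sphere. -/
def Skeleton.GenusZero (S : Skeleton) : Prop :=
  numOrbits S.x + numOrbits S.y + numOrbits (S.x * S.y) = Fintype.card S.E + 2

/-! Multiplying the Euler characteristic `V_• + V_∘ - |E| + F` by 6 and counting edges three
ways — `|E| = 3 (V_• - n_•) + n_•` since `x³ = 1`, `|E| = 2 (V_∘ - n_∘) + n_∘` since `y² = 1`,
and `|E| = Σ i nᵢ` over the regions, with `F = Σ nᵢ` — gives
`6 (V_• + V_∘ - |E| + F) = 4 n_• + 3 n_∘ + Σ (6 - i) nᵢ`, so the Euler characteristic is 2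
exactly when the right-hand side is 12. -/

open Finset

namespace Equiv.Perm

variable {E : Type} [Fintype E] [DecidableEq E]

theorem numFixed_add_sum_cycleType (g : Perm E) :
    numFixed g + g.cycleType.sum = Fintype.card E := by
  have hfix : numFixed g = Fintype.card E - g.cycleType.sum := by
    rw [← card_fixedPoints]
    exact Fintype.card_congr (Equiv.refl _)
  have := g.sum_cycleType_le
  omega

theorem card_eq_mul_card_cycleType_add_numFixed {p : ℕ} [Fact p.Prime] {g : Perm E}
    (h : g ^ p = 1) : Fintype.card E = p * Multiset.card g.cycleType + numFixed g := by
  have := numFixed_add_sum_cycleType g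
  rw [cycleType_of_pow_prime_eq_one h, Multiset.sum_replicate, smul_eq_mul, mul_comm] at this
  omega

theorem sum_Icc_numOrbitsOfSize_smul {M : Type*} [AddCommMonoid M] (g : Perm E)
    (f : ℕ → M) :
    ∑ i ∈ Icc 1 (Fintype.card E), numOrbitsOfSize g i • f i =
      numFixed g • f 1 + (g.cycleType.map f).sum := by
  rcases Nat.eq_zero_or_pos (Fintype.card E) with hE | hE
  · have : IsEmpty E := Fintype.card_eq_zero_iff.mp hE
    have hg : g = 1 := Subsingleton.elim _ _
    simp [hg, numFixed]
  have hcycle : g.cycleType.toFinset ⊆ Ioc 1 (Fintype.card E) := fun a ha => by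
    rw [Multiset.mem_toFinset] at ha
    exact mem_Ioc.mpr ⟨one_lt_of_mem_cycleType ha,
      (Multiset.le_sum_of_mem ha).trans g.sum_cycleType_le⟩
  rw [← Ioc_insert_left hE, sum_insert (by simp), sum_multiset_map_count,
    sum_subset hcycle fun a _ ha => by simp [Multiset.count_eq_zero.mpr (by simpa using ha)]]
  congr 1
  refine sum_congr rfl fun i hi => ?_
  have hi1 : i ≠ 1 := by rw [mem_Ioc] at hi; omega
  simp [numOrbitsOfSize, hi1]

theorem sum_Icc_numOrbitsOfSize (g : Perm E) :
    ∑ i ∈ Icc 1 (Fintype.card E), numOrbitsOfSize g i = numOrbits g := by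
  have h := sum_Icc_numOrbitsOfSize_smul g (fun _ => 1)
  simp only [smul_eq_mul, mul_one, Multiset.map_const', Multiset.sum_replicate] at h
  rw [h, numOrbits, add_comm]

theorem sum_Icc_mul_numOrbitsOfSize (g : Perm E) :
    ∑ i ∈ Icc 1 (Fintype.card E), i * numOrbitsOfSize g i = Fintype.card E := by
  simpa [mul_comm, numFixed_add_sum_cycleType] using sum_Icc_numOrbitsOfSize_smul g id

theorem sum_Icc_sub_mul_numOrbitsOfSize (g : Perm E) (c : ℤ) :
    ∑ i ∈ Icc 1 (Fintype.card E), (c - i) * (numOrbitsOfSize g i : ℤ) =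
      c * numOrbits g - Fintype.card E := by
  simp only [sub_mul, sum_sub_distrib, ← mul_sum]
  have hcount : ∑ i ∈ Icc 1 (Fintype.card E), (numOrbitsOfSize g i : ℤ) = numOrbits g := by
    exact_mod_cast sum_Icc_numOrbitsOfSize g
  have hwidth : ∑ i ∈ Icc 1 (Fintype.card E), (i : ℤ) * numOrbitsOfSize g i =
      Fintype.card E := by
    exact_mod_cast sum_Icc_mul_numOrbitsOfSize g
  rw [hcount, hwidth]

end Equiv.Perm

/-- Euler's formula for skeletons: a skeleton has genus zero if and only if
`3n_∘ + 4n_• + Σ_{i ≥ 1} (6 - i) n_i = 12`, where `n_•`, `n_∘` are the numbers of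
monovalent black and white vertices and `n_i` is the number of regions of width `i`. -/
theorem skeleton_genus_zero_iff (S : Skeleton) :
    S.GenusZero ↔
      (3 * (numFixed S.y : ℤ) + 4 * (numFixed S.x : ℤ) +
        ∑ i ∈ Finset.Icc 1 (Fintype.card S.E),
          (6 - (i : ℤ)) * (numOrbitsOfSize (S.x * S.y) i : ℤ)) = 12 := by
  have hx := Equiv.Perm.card_eq_mul_card_cycleType_add_numFixed S.hx
  have hy := Equiv.Perm.card_eq_mul_card_cycleType_add_numFixed S.hy
  rw [Equiv.Perm.sum_Icc_sub_mul_numOrbitsOfSize, Skeleton.GenusZero]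
  unfold numOrbits at *
  omega
end

section
/- Let Sk be a finite skeleton of genus zero in which every region has width divisible by N and in which all vertices have full valency (3 for black, 2 for white). Then N ≤ 5. -/
lemma numFixed_add_support {E : Type} [Fintype E] [DecidableEq E] (g : Equiv.Perm E) :
    numFixed g + g.support.card = Fintype.card E := by
  classical
  rw [numFixed, Fintype.card_subtype]
  have : g.support = Finset.univ.filter (fun e => ¬ g e = e) := by
    ext e; simp [Equiv.Perm.mem_support]
  rw [this]
  exact Finset.card_filter_add_card_filter_not _

lemma sum_cycleType_const {E : Type} [Fintype E] [DecidableEq E] (g : Equiv.Perm E) (c : ℕ)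
    (h : ∀ n ∈ g.cycleType, n = c) :
    g.cycleType.sum = Multiset.card g.cycleType * c := by
  rw [Multiset.eq_replicate_card.mpr h]
  simp [Multiset.sum_replicate]

/-- If a regular (no monovalent vertices) skeleton of genus zero is nonempty and the
width of each of its regions is divisible by `N`, then `N ≤ 5`. -/
theorem regular_genus_zero_width_bound (S : Skeleton) (N : ℕ)
    (hne : Nonempty S.E)
    (hreg_black : numFixed S.x = 0) (hreg_white : numFixed S.y = 0)
    (hgenus : S.GenusZero)
    (hdiv : ∀ i : ℕ, numOrbitsOfSize (S.x * S.y) i ≠ 0 → N ∣ i) :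
    N ≤ 5 := by
  classical
  by_contra hN
  push_neg at hN
  set m := Fintype.card S.E with hm
  have hmpos : 0 < m := Fintype.card_pos
  -- black vertices: all cycles of x have length 3
  have hx3 : ∀ n ∈ S.x.cycleType, n = 3 := by
    intro n hn
    have h2 := Equiv.Perm.two_le_of_mem_cycleType hn
    have hdvd : n ∣ 3 := by
      refine (Multiset.dvd_lcm hn).trans ?_
      rw [Equiv.Perm.lcm_cycleType]
      exact orderOf_dvd_of_pow_eq_one S.hx
    rcases (Nat.prime_three).eq_one_or_self_of_dvd n hdvd with h | h <;> omega
  have hy2 : ∀ n ∈ S.y.cycleType, n = 2 := by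
    intro n hn
    have h2 := Equiv.Perm.two_le_of_mem_cycleType hn
    have hdvd : n ∣ 2 := by
      refine (Multiset.dvd_lcm hn).trans ?_
      rw [Equiv.Perm.lcm_cycleType]
      exact orderOf_dvd_of_pow_eq_one S.hy
    rcases (Nat.prime_two).eq_one_or_self_of_dvd n hdvd with h | h <;> omega
  set Bx := Multiset.card S.x.cycleType with hBx
  set By := Multiset.card S.y.cycleType with hBy
  set z := S.x * S.y with hz
  set F := Multiset.card z.cycleType with hF
  have hmx : Bx * 3 = m := by
    have := numFixed_add_support S.x
    rw [hreg_black, ← Equiv.Perm.sum_cycleType, sum_cycleType_const S.x 3 hx3] at this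
    omega
  have hmy : By * 2 = m := by
    have := numFixed_add_support S.y
    rw [hreg_white, ← Equiv.Perm.sum_cycleType, sum_cycleType_const S.y 2 hy2] at this
    omega
  -- z has no fixed points
  have hzfix : numFixed z = 0 := by
    by_contra h
    have := hdiv 1 (by simpa [numOrbitsOfSize] using h)
    have := Nat.le_of_dvd one_pos this
    omega
  -- each cycle of z has length ≥ N
  have hzlen : ∀ n ∈ z.cycleType, N ≤ n := by
    intro n hn
    have h2 := Equiv.Perm.two_le_of_mem_cycleType hn
    have hcount : numOrbitsOfSize z n ≠ 0 := by
      rw [numOrbitsOfSize, if_neg (by omega)]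
      simpa [Multiset.count_pos] using hn
    exact Nat.le_of_dvd (by omega) (hdiv n hcount)
  have hsum : z.cycleType.sum = m := by
    have := numFixed_add_support z
    rw [hzfix, ← Equiv.Perm.sum_cycleType] at this
    omega
  have hFN : F * N ≤ m := by
    have := Multiset.card_nsmul_le_sum hzlen
    rwa [smul_eq_mul, ← hF, hsum] at this
  have h6F : F * 6 ≤ F * N := Nat.mul_le_mul_left F hN
  have hgen : Bx + By + F = m + 2 := by
    have := hgenus
    rw [Skeleton.GenusZero] at this
    unfold numOrbits at this
    rw [← hz] at this
    rw [hreg_black, hreg_white, hzfix] at this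
    omega
  omega
end
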